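/- Let P = U Σ^{-2} Uᵀ where U ∈ ℝ^{E×k} has orthonormal columns and Σ is positive definite diagonal. Let Q = H Hᵀ be symmetric PSD with Q·P = D·P + U·Uᵀ for some symmetric PSD D (this is the key structural identity of continually truncated SVD). Then ‖Hᵀ·P·H‖_F² = trace(D·P·D·P) + 2·trace(D·P) + k. -/
import Mathlib


open Matrix

attribute [local instance] Matrix.frobeniusNormedAddCommGroup

private lemma frob_norm_sq_eq_trace {m n : ℕ} (A : Matrix (Fin m) (Fin n) ℝ) :
    ‖A‖ ^ 2 = (Aᵀ * A).trace := by
  have h : ‖A‖ ^ (2 : ℕ) = ((∑ i, ∑ j, ‖A i j‖ ^ (2 : ℝ)) ^ (1 / 2 : ℝ)) ^ (2 : ℕ) := by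
    rw [Matrix.frobenius_norm_def]
  rw [h, ← Real.rpow_natCast _ 2, ← Real.rpow_mul (by positivity)]
  norm_num
  rw [Matrix.trace, Finset.sum_comm]
  congr 1
  ext i
  simp [Matrix.diag, Matrix.mul_apply, Real.norm_eq_abs, Real.rpow_two, sq_abs, sq]

/-- Given `P = U Σ⁻² Uᵀ` with `U` orthonormal-column and the structural identity
`H Hᵀ P = D P + U Uᵀ` for a symmetric PSD `D`,
`‖Hᵀ P H‖_F² = trace (D P D P) + 2 trace (D P) + k`. -/
theorem frobSq_HtPH {E M k : ℕ}
    (H : Matrix (Fin E) (Fin M) ℝ)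
    (U : Matrix (Fin E) (Fin k) ℝ) (σ : Fin k → ℝ)
    (D P : Matrix (Fin E) (Fin E) ℝ)
    (hU : Uᵀ * U = 1) (hσ : ∀ i, 0 < σ i)
    (hP : P = U * Matrix.diagonal (fun i => ((σ i) ^ 2)⁻¹) * Uᵀ)
    (hD : D.PosSemidef)
    (hkey : H * Hᵀ * P = D * P + U * Uᵀ) :
    ‖Hᵀ * P * H‖ ^ 2 = (D * P * D * P).trace + 2 * (D * P).trace + (k : ℝ) := by
  have hPsym : Pᵀ = P := by
    rw [hP]; simp [Matrix.transpose_mul, Matrix.mul_assoc]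
  have hPU : P * U * Uᵀ = P := by
    rw [hP]
    calc U * Matrix.diagonal (fun i => ((σ i) ^ 2)⁻¹) * Uᵀ * U * Uᵀ
        = U * Matrix.diagonal (fun i => ((σ i) ^ 2)⁻¹) * (Uᵀ * U) * Uᵀ := by
          simp [Matrix.mul_assoc]
      _ = U * Matrix.diagonal (fun i => ((σ i) ^ 2)⁻¹) * Uᵀ := by rw [hU, Matrix.mul_one]
  -- step 1 : norm squared as trace
  rw [frob_norm_sq_eq_trace]
  have hAT : (Hᵀ * P * H)ᵀ = Hᵀ * P * H := by
    simp [Matrix.transpose_mul, hPsym, Matrix.mul_assoc]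
  rw [hAT]
  -- step 2 : cyclic trace rearrangement to trace ((HHᵀP)(HHᵀP))
  have ht : (Hᵀ * P * H * (Hᵀ * P * H)).trace
      = ((H * Hᵀ * P) * (H * Hᵀ * P)).trace := by
    rw [show Hᵀ * P * H * (Hᵀ * P * H) = Hᵀ * (P * H * (Hᵀ * P * H)) by
      simp [Matrix.mul_assoc]]
    rw [Matrix.trace_mul_comm]
    simp only [Matrix.mul_assoc]
    rw [Matrix.trace_mul_comm P]
    simp [Matrix.mul_assoc]
  rw [ht, hkey]
  -- step 3 : expand
  rw [add_mul, mul_add, mul_add, Matrix.trace_add, Matrix.trace_add, Matrix.trace_add]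
  have h2 : (D * P * (U * Uᵀ)).trace = (D * P).trace := by
    rw [show D * P * (U * Uᵀ) = D * (P * U * Uᵀ) by simp [Matrix.mul_assoc], hPU]
  have h3 : (U * Uᵀ * (D * P)).trace = (D * P).trace := by
    rw [Matrix.trace_mul_comm, show D * P * (U * Uᵀ) = D * (P * U * Uᵀ) by
      simp [Matrix.mul_assoc], hPU]
  have h4 : (U * Uᵀ * (U * Uᵀ)).trace = (k : ℝ) := by
    rw [show U * Uᵀ * (U * Uᵀ) = U * (Uᵀ * U) * Uᵀ by simp [Matrix.mul_assoc], hU,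
      Matrix.mul_one, Matrix.trace_mul_comm, hU]
    simp
  rw [h2, h3, h4, show D * P * (D * P) = D * P * D * P by simp [Matrix.mul_assoc]]
  ring
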